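/- Proposition A.2 (recurrence consequence): Suppose sequences (g_n^k)_{n,k≥0} of complex numbers satisfy the recurrence g_n^k = ((s−n−1)/(n+1))·(g_{n+1}^{k−1} − g_0^{k−1}·q_{n+1}) for all n ≥ 0, k ≥ 1, where s ∈ ℂ is not a nonnegative integer (so all binomial coefficients C(s−1,m) are nonzero) and (q_m)_{m≥0} is a fixed sequence with q_0 = 1. Then for all n, k ≥ 0: C(s−1,n)·(g_n^k − g_0^k·q_n) + Σ_{m=0}^{k} C(s−1,n+m)·q_{n+m}·g_0^{k−m} = C(s−1,n+k)·g_{n+k}^0, where C(s−1,m) = (s−1)(s−2)⋯(s−m)/m! is the generalized binomial coefficient. -/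
import Mathlib


open Finset

/-- The generalized binomial coefficient `C(s−1, m) = (s−1)(s−2)⋯(s−m)/m!`. -/
noncomputable def genBinom (s : ℂ) (m : ℕ) : ℂ :=
  (∏ j ∈ Finset.range m, (s - 1 - j)) / (m.factorial : ℂ)

lemma genBinom_succ (s : ℂ) (n : ℕ) :
    genBinom s (n + 1) = genBinom s n * ((s - n - 1) / (n + 1)) := by
  simp only [genBinom, Finset.prod_range_succ, Nat.factorial_succ]
  have h1 : ((n : ℂ) + 1) ≠ 0 := Nat.cast_add_one_ne_zero n
  have h2 : ((n.factorial : ℂ)) ≠ 0 := Nat.cast_ne_zero.2 n.factorial_ne_zero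
  push_cast
  field_simp
  ring

/-- Proposition A.2: if `g_n^k` satisfies the recurrence
`g_n^k = ((s−n−1)/(n+1))·(g_{n+1}^{k−1} − g_0^{k−1}·q_{n+1})` with `s` not a
nonnegative integer and `q_0 = 1`, then for all `n, k ≥ 0`:
`C(s−1,n)(g_n^k − g_0^k·q_n) + Σ_{m=0}^k C(s−1,n+m)·q_{n+m}·g_0^{k−m} = C(s−1,n+k)·g_{n+k}^0`. -/
theorem propositionA2 (s : ℂ) (hs : ∀ m : ℕ, s ≠ (m : ℂ))
    (q : ℕ → ℂ) (hq0 : q 0 = 1) (g : ℕ → ℕ → ℂ)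
    (hrec : ∀ n k : ℕ,
      g n (k + 1) = ((s - n - 1) / (n + 1)) * (g (n + 1) k - g 0 k * q (n + 1)))
    (n k : ℕ) :
    genBinom s n * (g n k - g 0 k * q n) +
        ∑ m ∈ Finset.range (k + 1), genBinom s (n + m) * q (n + m) * g 0 (k - m) =
      genBinom s (n + k) * g (n + k) 0 := by
  induction k generalizing n with
  | zero =>
    rw [Finset.sum_range_one]
    simp only [Nat.add_zero, Nat.sub_zero]
    ring
  | succ k ih =>
    have key : genBinom s n * g n (k + 1)
        = genBinom s (n + 1) * (g (n + 1) k - g 0 k * q (n + 1)) := by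
      rw [hrec, genBinom_succ]; ring
    have h := ih (n + 1)
    simp only [show ∀ m, n + 1 + m = n + (m + 1) from fun m => by ring] at h
    rw [Finset.sum_range_succ']
    simp only [Nat.succ_sub_succ, Nat.add_zero, Nat.sub_zero]
    linear_combination key + h
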